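/- EDPD with strongly convex primal: if f is μ_f-strongly convex (μ_f > 0, g merely convex), with τ_t = (t+1)τ, τ ≤ μ_f/(2‖A‖²), η_t = 1/(τ_t‖A‖²), α_{t+1} = (t+2)/(t+3), y_0 = y_1, the weighted averages x̃_{k+1} = ∑_{t=1}^k (t+2)x_{t+1}/∑_{t=1}^k(t+2) and similarly ỹ_{k+1} satisfy L(x̃_{k+1}, y) − L(x, ỹ_{k+1}) ≤ (1/(k(k+5)))(6τ‖A‖²‖x − x_1‖² + (3/(2τ))‖y − y_1‖²) for all (x,y). -/

import Mathlib

/-!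
Each iteration is a proximal step in `x` followed by a proximal step in `y`, so both satisfy a
three-point inequality (the minimiser of an `m`-strongly convex function `ψ` has
`ψ u + m/2 ‖z - u‖² ≤ ψ z`). Adding them and weighting by `t + 2` bounds
`(t + 2) (L(x_{t+1}, y) - L(x, y_{t+1}))` by `Φ_t - Φ_{t+1}` for the Lyapunov function
`lyapunov`:
the extrapolation `ŷ_t` makes the bilinear cross terms telescope, and the remaining error term
is absorbed by Young's inequality, using `μ_f ≥ 2τ‖A‖²` for the primal distance. Summing,
`Φ ≥ 0` and `Φ_1` is explicit because `y_0 = y_1`; Jensen's inequality for the convex–concave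
`L` moves the weighted sum onto the averages, and `∑_{t=1}^k (t + 2) = k(k + 5)/2`.
-/

open scoped RealInnerProductSpace
open Set Filter Topology

section Convexity

variable {E : Type*} [NormedAddCommGroup E] [InnerProductSpace ℝ E]

theorem StrongConvexOn.add_sq_norm_sub_le_of_forall_le {ψ : E → ℝ} {m : ℝ}
    (hψ : StrongConvexOn univ m ψ) {u : E} (hu : ∀ z, ψ u ≤ ψ z) (z : E) :
    ψ u + m / 2 * ‖z - u‖ ^ 2 ≤ ψ z := by
  have key : ∀ l ∈ Ioo (0 : ℝ) 1, ψ u + (1 - l) * (m / 2 * ‖z - u‖ ^ 2) ≤ ψ z := by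
    rintro l ⟨hl0, hl1⟩
    have hconv := hψ.2 (mem_univ u) (mem_univ z) (sub_nonneg.2 hl1.le) hl0.le (by ring)
    have hmin := hu ((1 - l) • u + l • z)
    rw [smul_eq_mul, smul_eq_mul, norm_sub_rev] at hconv
    nlinarith
  have hlim : Tendsto (fun l : ℝ => ψ u + (1 - l) * (m / 2 * ‖z - u‖ ^ 2)) (𝓝[>] 0)
      (𝓝 (ψ u + m / 2 * ‖z - u‖ ^ 2)) := by
    have : Continuous (fun l : ℝ => ψ u + (1 - l) * (m / 2 * ‖z - u‖ ^ 2)) := by fun_prop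
    simpa using (this.tendsto 0).mono_left nhdsWithin_le_nhds
  refine le_of_tendsto hlim ?_
  filter_upwards [Ioo_mem_nhdsGT zero_lt_one] with l hl using key l hl

theorem strongConvexOn_univ_sq_norm_sub_div (c : E) (s : ℝ) :
    StrongConvexOn univ s⁻¹ (fun z => ‖z - c‖ ^ 2 / (2 * s)) := by
  rw [strongConvexOn_iff_convex]
  refine ⟨convex_univ, fun x _ y _ a b _ _ hab => le_of_eq ?_⟩
  simp only [norm_sub_sq_real, smul_eq_mul, inner_add_left, real_inner_smul_left]
  obtain rfl := eq_sub_of_add_eq hab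
  ring

theorem StrongConvexOn.add {f g : E → ℝ} {s : Set E} {m n : ℝ} (hf : StrongConvexOn s m f)
    (hg : StrongConvexOn s n g) : StrongConvexOn s (m + n) (f + g) := by
  refine (UniformConvexOn.add hf hg).mono fun r => le_of_eq ?_
  simp only [Pi.add_apply]
  ring

theorem StrongConvexOn.prox_three_point {φ : E → ℝ} {μ : ℝ} (hφ : StrongConvexOn univ μ φ)
    {s : ℝ} {c u : E}
    (hu : ∀ z, φ u + ‖u - c‖ ^ 2 / (2 * s) ≤ φ z + ‖z - c‖ ^ 2 / (2 * s)) (z : E) :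
    φ u + ‖u - c‖ ^ 2 / (2 * s) + (μ + s⁻¹) / 2 * ‖z - u‖ ^ 2 ≤
      φ z + ‖z - c‖ ^ 2 / (2 * s) :=
  (hφ.add (strongConvexOn_univ_sq_norm_sub_div c s)).add_sq_norm_sub_le_of_forall_le hu z

end Convexity

section PrimalDual

variable {E F : Type*} [NormedAddCommGroup E] [InnerProductSpace ℝ E]
  [NormedAddCommGroup F] [InnerProductSpace ℝ F]

def lagrangian (f : E → ℝ) (g : F → ℝ) (A : E →L[ℝ] F) (u : E) (v : F) : ℝ :=
  f u + ⟪A u, v⟫ - g v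

theorem ContinuousLinearMap.inner_apply_le_young (A : E →L[ℝ] F) (u : E) (v : F) {s : ℝ}
    (hs : 0 < s) :
    ⟪A u, v⟫ ≤ s * ‖A‖ ^ 2 / 2 * ‖u‖ ^ 2 + ‖v‖ ^ 2 / (2 * s) := by
  have hAu : ⟪A u, v⟫ ≤ ‖A‖ * ‖u‖ * ‖v‖ :=
    (real_inner_le_norm _ _).trans (mul_le_mul_of_nonneg_right (A.le_opNorm u) (norm_nonneg v))
  have hsq : 0 ≤ (s * (‖A‖ * ‖u‖) - ‖v‖) ^ 2 / (2 * s) := by positivity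
  have hid : s * ‖A‖ ^ 2 / 2 * ‖u‖ ^ 2 + ‖v‖ ^ 2 / (2 * s) - ‖A‖ * ‖u‖ * ‖v‖
      = (s * (‖A‖ * ‖u‖) - ‖v‖) ^ 2 / (2 * s) := by
    field_simp
    ring
  linarith

theorem ConvexOn.prox_ascent_three_point {g : F → ℝ} (hg : ConvexOn ℝ univ g) {s : ℝ}
    (hs : s ≠ 0) {y u w : F}
    (hu : ∀ z, ‖u - (y + s • w)‖ ^ 2 / (2 * s) + g u ≤
      ‖z - (y + s • w)‖ ^ 2 / (2 * s) + g z) (z : F) :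
    g u - g z + ⟪w, z - u⟫ + (‖u - y‖ ^ 2 + ‖z - u‖ ^ 2 - ‖z - y‖ ^ 2) / (2 * s) ≤ 0 := by
  have h := (strongConvexOn_zero.2 hg).prox_three_point (c := y + s • w)
    (fun z => (add_comm _ _).trans_le ((hu z).trans_eq (add_comm _ _))) z
  have hshift : ∀ p : F,
      ‖p - (y + s • w)‖ ^ 2 = ‖p - y‖ ^ 2 - 2 * s * ⟪p - y, w⟫ + s ^ 2 * ‖w‖ ^ 2 := by
    intro p
    rw [← sub_sub, norm_sub_sq_real, inner_smul_right, norm_smul, Real.norm_eq_abs, mul_pow,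
      sq_abs]
    ring
  have hinner : ⟪z - y, w⟫ - ⟪u - y, w⟫ = ⟪w, z - u⟫ := by
    rw [← inner_sub_left, sub_sub_sub_cancel_right, real_inner_comm]
  have hdiff : (‖z - (y + s • w)‖ ^ 2 - ‖u - (y + s • w)‖ ^ 2) / (2 * s)
      = (‖z - y‖ ^ 2 - ‖u - y‖ ^ 2) / (2 * s) - ⟪w, z - u⟫ := by
    rw [hshift, hshift, ← hinner]
    field_simp
    ring
  have hmod : (0 + s⁻¹) / 2 * ‖z - u‖ ^ 2 = ‖z - u‖ ^ 2 / (2 * s) := by ring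
  simp only [add_div, sub_div] at hdiff ⊢
  linarith

theorem lagrangian_sub_le_of_prox_steps {f : E → ℝ} {g : F → ℝ} {A : E →L[ℝ] F} {μ η s : ℝ}
    (hf : StrongConvexOn univ μ f) (hg : ConvexOn ℝ univ g) (hs : s ≠ 0)
    {x x' : E} {y y' ŷ : F}
    (hx' : ∀ z, f x' + ⟪A x', ŷ⟫ + ‖x' - x‖ ^ 2 / (2 * η) ≤
      f z + ⟪A z, ŷ⟫ + ‖z - x‖ ^ 2 / (2 * η))
    (hy' : ∀ z, ‖y' - (y + s • A x')‖ ^ 2 / (2 * s) + g y' ≤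
      ‖z - (y + s • A x')‖ ^ 2 / (2 * s) + g z)
    (u : E) (v : F) :
    lagrangian f g A x' v - lagrangian f g A u y' ≤
      ⟪A (x' - u), y' - ŷ⟫ + (‖u - x‖ ^ 2 - ‖x' - x‖ ^ 2) / (2 * η)
        - (μ + η⁻¹) / 2 * ‖u - x'‖ ^ 2
        + (‖v - y‖ ^ 2 - ‖y' - y‖ ^ 2 - ‖v - y'‖ ^ 2) / (2 * s) := by
  have hlin : ConvexOn ℝ univ fun z => ⟪A z, ŷ⟫ :=
    ⟨convex_univ, fun _ _ _ _ _ _ _ _ _ => le_of_eq <| by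
      simp only [map_add, map_smul, inner_add_left, real_inner_smul_left, smul_eq_mul]⟩
  have hφ : StrongConvexOn univ μ fun z => f z + ⟪A z, ŷ⟫ := by
    have h := hf.add (strongConvexOn_zero.2 hlin)
    rwa [add_zero] at h
  have hprimal := hφ.prox_three_point hx' u
  have hdual := hg.prox_ascent_three_point hs hy' v
  have hcross : ⟪A (x' - u), y' - ŷ⟫ = ⟪A x', y'⟫ - ⟪A u, y'⟫ - ⟪A x', ŷ⟫ + ⟪A u, ŷ⟫ := by
    simp only [map_sub, inner_sub_left, inner_sub_right]
    ring
  have hpairing : ⟪A x', v - y'⟫ = ⟪A x', v⟫ - ⟪A x', y'⟫ := inner_sub_right _ _ _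
  simp only [lagrangian, add_div, sub_div] at hdual ⊢
  linarith

noncomputable def lyapunov (A : E →L[ℝ] F) (τ : ℝ) (x : ℕ → E) (y : ℕ → F) (u : E) (v : F)
    (t : ℕ) : ℝ :=
  ((t : ℝ) + 1) * ((t : ℝ) + 2) * τ * ‖A‖ ^ 2 / 2 * ‖u - x t‖ ^ 2
    + ((t : ℝ) + 2) / (2 * ((t : ℝ) + 1) * τ) * (‖v - y t‖ ^ 2 + ‖y t - y (t - 1)‖ ^ 2)
    - ((t : ℝ) + 1) * ⟪A (x t - u), y t - y (t - 1)⟫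

theorem weighted_inner_apply_le (A : E →L[ℝ] F) {τ : ℝ} (hτ : 0 < τ) (t : ℕ) (u : E) (v : F) :
    ((t : ℝ) + 1) * ⟪A u, v⟫ ≤
      ((t : ℝ) + 1) * ((t : ℝ) + 2) * τ * ‖A‖ ^ 2 / 2 * ‖u‖ ^ 2
        + ((t : ℝ) + 2) / (2 * ((t : ℝ) + 1) * τ) * ‖v‖ ^ 2 := by
  have hyoung := A.inner_apply_le_young u v (s := ((t : ℝ) + 2) * τ) (by positivity)
  have hcoef : ((t : ℝ) + 1) / (2 * (((t : ℝ) + 2) * τ)) ≤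
      ((t : ℝ) + 2) / (2 * ((t : ℝ) + 1) * τ) := by
    rw [div_le_div_iff₀ (by positivity) (by positivity)]
    nlinarith
  calc ((t : ℝ) + 1) * ⟪A u, v⟫
      ≤ ((t : ℝ) + 1) * (((t : ℝ) + 2) * τ * ‖A‖ ^ 2 / 2 * ‖u‖ ^ 2
          + ‖v‖ ^ 2 / (2 * (((t : ℝ) + 2) * τ))) := by gcongr
    _ = ((t : ℝ) + 1) * ((t : ℝ) + 2) * τ * ‖A‖ ^ 2 / 2 * ‖u‖ ^ 2
          + ((t : ℝ) + 1) / (2 * (((t : ℝ) + 2) * τ)) * ‖v‖ ^ 2 := by ring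
    _ ≤ _ := by gcongr

theorem lyapunov_nonneg (A : E →L[ℝ] F) {τ : ℝ} (hτ : 0 < τ) (x : ℕ → E) (y : ℕ → F) (u : E)
    (v : F) (t : ℕ) : 0 ≤ lyapunov A τ x y u v t := by
  have h := weighted_inner_apply_le A hτ t (x t - u) (y t - y (t - 1))
  rw [norm_sub_rev] at h
  unfold lyapunov
  have : 0 ≤ ((t : ℝ) + 2) / (2 * ((t : ℝ) + 1) * τ) * ‖v - y t‖ ^ 2 := by positivity
  linarith

theorem lyapunov_one {A : E →L[ℝ] F} {τ : ℝ} {x : ℕ → E} {y : ℕ → F} (hy : y 0 = y 1) (u : E)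
    (v : F) :
    lyapunov A τ x y u v 1 = 3 * τ * ‖A‖ ^ 2 * ‖u - x 1‖ ^ 2 + 3 / (4 * τ) * ‖v - y 1‖ ^ 2 := by
  simp only [lyapunov, Nat.sub_self, hy, sub_self, norm_zero, inner_zero_right, Nat.cast_one]
  ring

theorem weighted_lagrangian_sub_le_lyapunov_sub {f : E → ℝ} {g : F → ℝ} {A : E →L[ℝ] F}
    {μ τ : ℝ} (hf : StrongConvexOn univ μ f) (hg : ConvexOn ℝ univ g) (hτ : 0 < τ)
    (hμ : 2 * τ * ‖A‖ ^ 2 ≤ μ) {x : ℕ → E} {y : ℕ → F} {t : ℕ} {η s : ℝ} {ŷ : F}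
    (hs : s = ((t : ℝ) + 1) * τ) (hη : η = 1 / (s * ‖A‖ ^ 2))
    (hŷ : ŷ = (((t : ℝ) + 1) / ((t : ℝ) + 2)) • (y t - y (t - 1)) + y t)
    (hx : ∀ z, f (x (t + 1)) + ⟪A (x (t + 1)), ŷ⟫ + ‖x (t + 1) - x t‖ ^ 2 / (2 * η) ≤
      f z + ⟪A z, ŷ⟫ + ‖z - x t‖ ^ 2 / (2 * η))
    (hy : ∀ z, ‖y (t + 1) - (y t + s • A (x (t + 1)))‖ ^ 2 / (2 * s) + g (y (t + 1)) ≤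
      ‖z - (y t + s • A (x (t + 1)))‖ ^ 2 / (2 * s) + g z)
    (u : E) (v : F) :
    ((t : ℝ) + 2) * (lagrangian f g A (x (t + 1)) v - lagrangian f g A u (y (t + 1))) ≤
      lyapunov A τ x y u v t - lyapunov A τ x y u v (t + 1) := by
  have hs0 : s ≠ 0 := by rw [hs]; positivity
  have hgap := lagrangian_sub_le_of_prox_steps hf hg hs0 hx hy u v
  have hinv : η⁻¹ = s * ‖A‖ ^ 2 := by rw [hη, one_div, inv_inv]
  have hdiv : ∀ r, r / (2 * η) = s * ‖A‖ ^ 2 / 2 * r := fun r => by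
    rw [div_eq_mul_inv, mul_inv, hinv]; ring
  rw [hdiv, hinv, hs] at hgap
  -- the extrapolation makes the cross terms telescope, up to an error term handled by Young
  have hcross : ((t : ℝ) + 2) * ⟪A (x (t + 1) - u), y (t + 1) - ŷ⟫ =
      ((t : ℝ) + 2) * ⟪A (x (t + 1) - u), y (t + 1) - y t⟫
        - ((t : ℝ) + 1) * ⟪A (x t - u), y t - y (t - 1)⟫
        - ((t : ℝ) + 1) * ⟪A (x (t + 1) - x t), y t - y (t - 1)⟫ := by
    have hsplit : x (t + 1) - u = (x (t + 1) - x t) + (x t - u) := by abel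
    have hŷ' : y (t + 1) - ŷ =
        (y (t + 1) - y t) - (((t : ℝ) + 1) / ((t : ℝ) + 2)) • (y t - y (t - 1)) := by
      rw [hŷ]; abel
    rw [hŷ', inner_sub_right, real_inner_smul_right, hsplit]
    simp only [map_add, inner_add_left]
    field_simp
    ring
  have hyoung := weighted_inner_apply_le A hτ t (x t - x (t + 1)) (y t - y (t - 1))
  rw [norm_sub_rev (x t), ← neg_sub, map_neg, inner_neg_left] at hyoung
  have hcoef_x : ((t : ℝ) + 2) * ((t : ℝ) + 3) * τ * ‖A‖ ^ 2 / 2 * ‖u - x (t + 1)‖ ^ 2 ≤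
      ((t : ℝ) + 2) * (μ + ((t : ℝ) + 1) * τ * ‖A‖ ^ 2) / 2 * ‖u - x (t + 1)‖ ^ 2 := by
    have h := mul_le_mul_of_nonneg_left hμ (by positivity : (0 : ℝ) ≤ ((t : ℝ) + 2) / 2)
    refine mul_le_mul_of_nonneg_right ?_ (sq_nonneg _)
    linarith
  have hcoef_y : ((t : ℝ) + 3) / (2 * ((t : ℝ) + 2) * τ) ≤
      ((t : ℝ) + 2) / (2 * ((t : ℝ) + 1) * τ) := by
    rw [div_le_div_iff₀ (by positivity) (by positivity)]
    nlinarith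
  have hgap' := mul_le_mul_of_nonneg_left hgap (by positivity : (0 : ℝ) ≤ (t : ℝ) + 2)
  have hy_coef := mul_le_mul_of_nonneg_right hcoef_y
    (by positivity : (0 : ℝ) ≤ ‖v - y (t + 1)‖ ^ 2 + ‖y (t + 1) - y t‖ ^ 2)
  simp only [lyapunov, Nat.cast_add, Nat.cast_one, Nat.add_sub_cancel]
  linear_combination hgap' + hcross + hyoung + hcoef_x + hy_coef

theorem lagrangian_centerMass_sub_le {ι : Type*} {f : E → ℝ} {g : F → ℝ} (A : E →L[ℝ] F)
    (hf : ConvexOn ℝ univ f) (hg : ConvexOn ℝ univ g) {S : Finset ι} {w : ι → ℝ}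
    (hw : ∀ i ∈ S, 0 ≤ w i) (hW : 0 < ∑ i ∈ S, w i) (p : ι → E) (q : ι → F) (u : E) (v : F) :
    lagrangian f g A (S.centerMass w p) v - lagrangian f g A u (S.centerMass w q) ≤
      S.centerMass w fun i => lagrangian f g A (p i) v - lagrangian f g A u (q i) := by
  have hfp := hf.map_centerMass_le hw hW fun i _ => mem_univ (p i)
  have hgq := hg.map_centerMass_le hw hW fun i _ => mem_univ (q i)
  have hid : (S.centerMass w fun i => lagrangian f g A (p i) v - lagrangian f g A u (q i)) =
      S.centerMass w (f ∘ p) + ⟪A (S.centerMass w p), v⟫ - g v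
        - (f u + ⟪A u, S.centerMass w q⟫ - S.centerMass w (g ∘ q)) := by
    simp only [Finset.centerMass, lagrangian, smul_eq_mul, map_smul, map_sum,
      real_inner_smul_left, real_inner_smul_right, sum_inner, inner_sum, Function.comp_apply,
      mul_sub, mul_add, Finset.sum_add_distrib, Finset.sum_sub_distrib, ← Finset.sum_mul]
    field_simp
  rw [hid]
  simp only [lagrangian]
  linarith

theorem sum_Icc_le_sub_of_le_sub {a Φ : ℕ → ℝ} {m n : ℕ} (hmn : m ≤ n)
    (h : ∀ t ∈ Finset.Icc m n, a t ≤ Φ t - Φ (t + 1)) :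
    ∑ t ∈ Finset.Icc m n, a t ≤ Φ m - Φ (n + 1) := by
  refine (Finset.sum_le_sum h).trans_eq ?_
  have := Finset.sum_Icc_sub hmn (-Φ)
  simp only [Pi.neg_apply, neg_sub_neg, Finset.sum_sub_distrib] at this ⊢
  linarith

theorem sum_Icc_one_add_two (k : ℕ) :
    ∑ t ∈ Finset.Icc 1 k, ((t : ℝ) + 2) = k * (k + 5) / 2 := by
  induction k with
  | zero => simp
  | succ n ih =>
    rw [Finset.sum_Icc_succ_top (Nat.le_add_left 1 n), ih]
    push_cast
    ring

end PrimalDual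

theorem stmt17 {E F : Type*} [NormedAddCommGroup E] [InnerProductSpace ℝ E]
    [NormedAddCommGroup F] [InnerProductSpace ℝ F]
    (f : E → ℝ) (g : F → ℝ) (A : E →L[ℝ] F)
    (μf τ : ℝ) (hμf : 0 < μf) (hτ0 : 0 < τ) (hτ : τ ≤ μf / (2 * ‖A‖ ^ 2))
    (hf : StrongConvexOn Set.univ μf f)
    (hg : ConvexOn ℝ Set.univ g)
    (τt η α : ℕ → ℝ)
    (hτt : ∀ t, τt t = ((t : ℝ) + 1) * τ)
    (hη : ∀ t, η t = 1 / (τt t * ‖A‖ ^ 2))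
    (hα : ∀ t, α t = ((t : ℝ) + 1) / ((t : ℝ) + 2))
    (x : ℕ → E) (y yh : ℕ → F)
    (hy0 : y 0 = y 1)
    (hyh : ∀ t ≥ 1, yh t = α t • (y t - y (t - 1)) + y t)
    (hx : ∀ t ≥ 1, ∀ z,
      f (x (t + 1)) + ⟪A (x (t + 1)), yh t⟫ + ‖x (t + 1) - x t‖ ^ 2 / (2 * η t) ≤
      f z + ⟪A z, yh t⟫ + ‖z - x t‖ ^ 2 / (2 * η t))
    (hy : ∀ t ≥ 1, ∀ z,
      ‖y (t + 1) - (y t + τt t • A (x (t + 1)))‖ ^ 2 / (2 * τt t) + g (y (t + 1)) ≤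
      ‖z - (y t + τt t • A (x (t + 1)))‖ ^ 2 / (2 * τt t) + g z)
    (L : E → F → ℝ) (hL : ∀ u v, L u v = f u + ⟪A u, v⟫ - g v) :
    ∀ k : ℕ, 1 ≤ k → ∀ (xx : E) (yy : F),
      L ((∑ t ∈ Finset.Icc 1 k, ((t : ℝ) + 2))⁻¹ •
            ∑ t ∈ Finset.Icc 1 k, ((t : ℝ) + 2) • x (t + 1)) yy
        - L xx ((∑ t ∈ Finset.Icc 1 k, ((t : ℝ) + 2))⁻¹ •
            ∑ t ∈ Finset.Icc 1 k, ((t : ℝ) + 2) • y (t + 1)) ≤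
        1 / ((k : ℝ) * (k + 5)) *
          (6 * τ * ‖A‖ ^ 2 * ‖xx - x 1‖ ^ 2 + 3 / (2 * τ) * ‖yy - y 1‖ ^ 2) := by
  intro k hk xx yy
  obtain rfl : L = lagrangian f g A := funext fun u => funext fun v => hL u v
  have hμ : 2 * τ * ‖A‖ ^ 2 ≤ μf := by
    rcases (sq_nonneg ‖A‖).eq_or_lt with hA | hA
    · rw [← hA]; linarith
    · have := (le_div_iff₀ (by positivity)).1 hτ; linarith
  have hstep : ∀ t ∈ Finset.Icc 1 k,
      ((t : ℝ) + 2) * (lagrangian f g A (x (t + 1)) yy - lagrangian f g A xx (y (t + 1))) ≤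
        lyapunov A τ x y xx yy t - lyapunov A τ x y xx yy (t + 1) := fun t ht =>
    have ht : 1 ≤ t := (Finset.mem_Icc.1 ht).1
    weighted_lagrangian_sub_le_lyapunov_sub hf hg hτ0 hμ (hτt t) (hη t)
      (by rw [hyh t ht, hα]) (hx t ht) (hy t ht) xx yy
  have hW := sum_Icc_one_add_two k
  have hk' : (0 : ℝ) < k * (k + 5) := by positivity
  calc _ ≤ (Finset.Icc 1 k).centerMass (fun t => (t : ℝ) + 2) fun t =>
          lagrangian f g A (x (t + 1)) yy - lagrangian f g A xx (y (t + 1)) :=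
        lagrangian_centerMass_sub_le A (hf.convexOn fun r => by positivity) hg
          (fun t _ => by positivity) (by rw [hW]; positivity) _ _ xx yy
    _ ≤ (∑ t ∈ Finset.Icc 1 k, ((t : ℝ) + 2))⁻¹ *
          (lyapunov A τ x y xx yy 1 - lyapunov A τ x y xx yy (k + 1)) := by
        simp only [Finset.centerMass, smul_eq_mul]
        gcongr
        exact sum_Icc_le_sub_of_le_sub hk hstep
    _ ≤ (∑ t ∈ Finset.Icc 1 k, ((t : ℝ) + 2))⁻¹ * lyapunov A τ x y xx yy 1 := by
        gcongr
        linarith [lyapunov_nonneg A hτ0 x y xx yy (k + 1)]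
    _ = _ := by
        rw [hW, lyapunov_one hy0]
        field_simp
        ring
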